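/- Suppose Lemma A holds: for perturbations y1=0, y2,...,y5 of the Fibonacci set with ε := max ‖y_i‖ ≤ 1/1000, the total pairwise-distance change satisfies |∑_{i≠j} d(p_i+y_i, p_j+y_j) - 20/√5| ≤ c1 ε². Suppose Lemma B holds: min_{i≠j} d(p_i+y_i, p_j+y_j) ≤ 1/√5 - c2 ε. Then, setting c = c1/c2² and using Jensen's inequality on the nine unordered pairs other than the minimal one, the unordered-pair energy satisfies ∑_{i<j} (1/√5 + δ_ij)^{-p} ≥ (1/√5 + δ12)^{-p} + 9·(1/√5 - δ12/9 + c·δ12²)^{-p}, where δ_ij = d(p_i+y_i, p_j+y_j) - 1/√5 and δ12 = min_{i<j} δ_ij ≤ -c2 ε. -/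

import Mathlib

/-- Toroidal (geodesic) distance on the flat torus `T² = [0,1)²`. -/
noncomputable def torusDist (x y : ℝ × ℝ) : ℝ :=
  sInf {r : ℝ | ∃ a b : ℤ,
    r = Real.sqrt ((x.1 - y.1 + a) ^ 2 + (x.2 - y.2 + b) ^ 2)}

/-- Euclidean norm on `ℝ × ℝ`. -/
noncomputable def eNorm2 (v : ℝ × ℝ) : ℝ := Real.sqrt (v.1 ^ 2 + v.2 ^ 2)

/-- The five-point Fibonacci set on the flat torus. -/
noncomputable def fib5 : Fin 5 → ℝ × ℝ :=
  ![(0, 0), (1/5, 2/5), (2/5, 4/5), (3/5, 1/5), (4/5, 3/5)]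

lemma torusDist_comm (x y : ℝ × ℝ) : torusDist x y = torusDist y x := by
  unfold torusDist
  congr 1
  ext r
  constructor
  · rintro ⟨a, b, rfl⟩
    exact ⟨-a, -b, by push_cast; congr 1; ring⟩
  · rintro ⟨a, b, rfl⟩
    exact ⟨-a, -b, by push_cast; congr 1; ring⟩

lemma abs_fst_le_eNorm2 (v : ℝ × ℝ) : |v.1| ≤ eNorm2 v := by
  rw [← Real.sqrt_sq_eq_abs]
  exact Real.sqrt_le_sqrt (by nlinarith [sq_nonneg v.2])

lemma torusDist_lb (x y : ℝ × ℝ) (m : ℝ)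
    (h : ∀ a : ℤ, m ≤ |x.1 - y.1 + a|) : m ≤ torusDist x y := by
  refine le_csInf ⟨Real.sqrt ((x.1 - y.1 + ((0:ℤ):ℝ)) ^ 2 + (x.2 - y.2 + ((0:ℤ):ℝ)) ^ 2),
    ⟨0, 0, rfl⟩⟩ ?_
  rintro r ⟨a, b, rfl⟩
  calc m ≤ |x.1 - y.1 + a| := h a
    _ = Real.sqrt ((x.1 - y.1 + a) ^ 2) := (Real.sqrt_sq_eq_abs _).symm
    _ ≤ _ := Real.sqrt_le_sqrt (by nlinarith [sq_nonneg (x.2 - y.2 + (b:ℝ))])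

lemma fib5_fst (i : Fin 5) : (fib5 i).1 = (i : ℕ) / 5 := by
  fin_cases i <;> norm_num [fib5]

lemma int_frac_bound (k : ℤ) (hk : k ≠ 0) (hk4 : k.natAbs < 5) (a : ℤ) :
    (1:ℝ)/5 ≤ |(k:ℝ)/5 + a| := by
  have h5 : k + 5*a ≠ 0 := by omega
  have h1 : (1:ℤ) ≤ |k + 5*a| := Int.one_le_abs h5
  have heq : (k:ℝ)/5 + a = ((k + 5*a : ℤ) : ℝ)/5 := by push_cast; ring
  rw [heq, abs_div, abs_of_pos (show (0:ℝ) < 5 by norm_num), ← Int.cast_abs]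
  have : (1:ℝ) ≤ ((|k + 5*a| : ℤ) : ℝ) := by exact_mod_cast h1
  linarith

lemma pair_lb (y : Fin 5 → ℝ × ℝ) (ε : ℝ) (hyε : ∀ i, eNorm2 (y i) ≤ ε)
    (hεsmall : ε ≤ 1 / 1000) (i j : Fin 5) (hij : i ≠ j) :
    99/500 ≤ torusDist (fib5 i + y i) (fib5 j + y j) := by
  apply torusDist_lb
  intro a
  have h1 : |(y i).1| ≤ 1/1000 := (abs_fst_le_eNorm2 _).trans ((hyε i).trans hεsmall)
  have h2 : |(y j).1| ≤ 1/1000 := (abs_fst_le_eNorm2 _).trans ((hyε j).trans hεsmall)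
  have hk : ((i:ℕ):ℝ)/5 - ((j:ℕ):ℝ)/5 = ((i:ℕ) - (j:ℕ) : ℤ)/5 := by push_cast; ring
  have hfrac : (1:ℝ)/5 ≤ |(((i:ℕ) - (j:ℕ) : ℤ) : ℝ)/5 + a| := by
    apply int_frac_bound
    · have : (i:ℕ) ≠ (j:ℕ) := fun h => hij (Fin.ext h)
      omega
    · omega
  have hfst : (fib5 i + y i).1 - (fib5 j + y j).1
      = ((((i:ℕ) - (j:ℕ) : ℤ) : ℝ)/5) + ((y i).1 - (y j).1) := by
    show (fib5 i).1 + (y i).1 - ((fib5 j).1 + (y j).1) = _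
    rw [fib5_fst, fib5_fst]; push_cast; ring
  rw [hfst]
  have habs : |(((i:ℕ) - (j:ℕ) : ℤ) : ℝ)/5 + a|
      ≤ |(((i:ℕ) - (j:ℕ) : ℤ) : ℝ)/5 + ((y i).1 - (y j).1) + a| + |(y i).1 - (y j).1| := by
    have := abs_add_le ((((i:ℕ) - (j:ℕ) : ℤ) : ℝ)/5 + ((y i).1 - (y j).1) + a)
      (-((y i).1 - (y j).1))
    rw [abs_neg] at this
    calc |(((i:ℕ) - (j:ℕ) : ℤ) : ℝ)/5 + a|
        = |(((i:ℕ) - (j:ℕ) : ℤ) : ℝ)/5 + ((y i).1 - (y j).1) + a + -((y i).1 - (y j).1)| := by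
          ring_nf
      _ ≤ _ := this
  have h3 : |(y i).1 - (y j).1| ≤ 2/1000 := (abs_sub _ _).trans (by linarith)
  linarith

lemma convexOn_rpow_neg {p : ℝ} (hp : 0 < p) :
    ConvexOn ℝ (Set.Ioi (0:ℝ)) fun x : ℝ => x ^ (-p) := by
  have hint : interior (Set.Ioi (0:ℝ)) = Set.Ioi 0 := interior_Ioi
  apply convexOn_of_hasDerivWithinAt2_nonneg (convex_Ioi 0)
    (f' := fun x => -p * x ^ (-p - 1))
    (f'' := fun x => -p * ((-p - 1) * x ^ (-p - 1 - 1)))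
  · intro x hx
    exact (Real.continuousAt_rpow_const x (-p) (Or.inl (ne_of_gt hx))).continuousWithinAt
  · rw [hint]; intro x hx
    exact (Real.hasDerivAt_rpow_const (Or.inl (ne_of_gt hx))).hasDerivWithinAt
  · rw [hint]; intro x hx
    exact ((Real.hasDerivAt_rpow_const (p := -p - 1)
      (Or.inl (ne_of_gt hx))).const_mul (-p)).hasDerivWithinAt
  · rw [hint]; intro x hx
    have h1 : (0:ℝ) ≤ x ^ (-p - 1 - 1) := Real.rpow_nonneg (le_of_lt hx) _
    have h2 : -p * ((-p - 1) * x ^ (-p - 1 - 1)) = (p * (p + 1)) * x ^ (-p - 1 - 1) := by ring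
    rw [h2]
    exact mul_nonneg (by nlinarith) h1

/-- Suppose the Fibonacci set is perturbed by vectors `y_i` with `y₁ = 0` and
`ε = max ‖y_i‖ ≤ 1/1000`; Lemma A bounds the total change of the pairwise
distances by `c₁·ε²`, and Lemma B produces a pair at distance `≤ 1/√5 - c₂·ε`.
Writing `δ₁₂` for the minimal `δ_ij = d(p_i+y_i, p_j+y_j) - 1/√5`, one has
`δ₁₂ ≤ -c₂·ε` and, with `c = c₁/c₂²`, the unordered-pair energy satisfies
`∑_{i<j} (1/√5 + δ_ij)^{-p} ≥ (1/√5 + δ₁₂)^{-p} + 9·(1/√5 - δ₁₂/9 + c·δ₁₂²)^{-p}`. -/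
theorem jensen_energy_lower_bound
    (y : Fin 5 → ℝ × ℝ) (ε c₁ c₂ δmin p : ℝ)
    (hc₁ : 0 < c₁) (hc₂ : 0 < c₂) (hp : 0 < p)
    (hy0 : y 0 = 0)
    (hyε : ∀ i, eNorm2 (y i) ≤ ε)
    (hymax : ∃ i, eNorm2 (y i) = ε)
    (hεsmall : ε ≤ 1 / 1000)
    (lemA : |(∑ q ∈ (Finset.univ : Finset (Fin 5)).offDiag,
        torusDist (fib5 q.1 + y q.1) (fib5 q.2 + y q.2)) - 20 / Real.sqrt 5|
      ≤ c₁ * ε ^ 2)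
    (lemB : ∃ i j : Fin 5, i ≠ j ∧
      torusDist (fib5 i + y i) (fib5 j + y j) ≤ 1 / Real.sqrt 5 - c₂ * ε)
    (hδmin_mem : ∃ i j : Fin 5, i ≠ j ∧
      torusDist (fib5 i + y i) (fib5 j + y j) = 1 / Real.sqrt 5 + δmin)
    (hδmin_le : ∀ i j : Fin 5, i ≠ j →
      1 / Real.sqrt 5 + δmin ≤ torusDist (fib5 i + y i) (fib5 j + y j)) :
    δmin ≤ -(c₂ * ε) ∧
    (1 / Real.sqrt 5 + δmin) ^ (-p)
        + 9 * (1 / Real.sqrt 5 - δmin / 9 + (c₁ / c₂ ^ 2) * δmin ^ 2) ^ (-p)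
      ≤ ∑ q ∈ (Finset.univ : Finset (Fin 5)).offDiag.filter
          (fun q : Fin 5 × Fin 5 => q.1 < q.2),
          torusDist (fib5 q.1 + y q.1) (fib5 q.2 + y q.2) ^ (-p) := by
  classical
  set f : Fin 5 × Fin 5 → ℝ :=
    fun q => torusDist (fib5 q.1 + y q.1) (fib5 q.2 + y q.2) with hf
  have hε0 : 0 ≤ ε := by
    obtain ⟨i, hi⟩ := hymax; rw [← hi]; exact Real.sqrt_nonneg _
  have hδε : δmin ≤ -(c₂ * ε) := by
    obtain ⟨i, j, hij, hle⟩ := lemB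
    have := hδmin_le i j hij
    linarith
  refine ⟨hδε, ?_⟩
  have hδ0 : δmin ≤ 0 := by nlinarith
  have hpos : (0:ℝ) < 1 / Real.sqrt 5 + δmin := by
    obtain ⟨i, j, hij, heq⟩ := hδmin_mem
    rw [← heq]
    exact lt_of_lt_of_le (by norm_num) (pair_lb y ε hyε hεsmall i j hij)
  set P : Finset (Fin 5 × Fin 5) :=
    (Finset.univ : Finset (Fin 5)).offDiag.filter (fun q => q.1 < q.2) with hP
  -- the ordered sum is twice the unordered sum
  have hswap : ∑ q ∈ (Finset.univ : Finset (Fin 5)).offDiag.filter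
      (fun q => ¬ q.1 < q.2), f q = ∑ q ∈ P, f q := by
    apply Finset.sum_equiv (Equiv.prodComm (Fin 5) (Fin 5))
    · intro q
      simp only [Finset.mem_filter, Finset.mem_offDiag, Finset.mem_univ, true_and, hP,
        Equiv.prodComm_apply, Prod.fst_swap, Prod.snd_swap]
      constructor
      · rintro ⟨h1, h2⟩
        exact ⟨h1.symm, h1.lt_or_gt.resolve_left h2⟩
      · rintro ⟨h1, h2⟩
        exact ⟨h1.symm, lt_asymm h2⟩
    · intro q hq
      show f q = f q.swap
      simp only [hf, Prod.fst_swap, Prod.snd_swap]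
      exact torusDist_comm _ _
  have hsplit : (∑ q ∈ (Finset.univ : Finset (Fin 5)).offDiag, f q) = 2 * ∑ q ∈ P, f q := by
    rw [← Finset.sum_filter_add_sum_filter_not
      (Finset.univ : Finset (Fin 5)).offDiag (fun q => q.1 < q.2) f, hswap]
    ring
  -- the minimal pair, ordered
  have hq0ex : ∃ q0 ∈ P, f q0 = 1 / Real.sqrt 5 + δmin := by
    obtain ⟨i, j, hij, heq⟩ := hδmin_mem
    rcases hij.lt_or_gt with h | h
    · exact ⟨(i, j), by simp [hP, Finset.mem_filter, Finset.mem_offDiag, hij, h], heq⟩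
    · refine ⟨(j, i), by simp [hP, Finset.mem_filter, Finset.mem_offDiag, hij.symm, h], ?_⟩
      show torusDist (fib5 j + y j) (fib5 i + y i) = _
      rw [torusDist_comm]; exact heq
  obtain ⟨q0, hq0P, hq0val⟩ := hq0ex
  have hcardP : P.card = 10 := by decide
  set P9 := P.erase q0 with hP9
  have hcard9 : P9.card = 9 := by rw [hP9, Finset.card_erase_of_mem hq0P, hcardP]
  have hflb : ∀ q ∈ P9, 1 / Real.sqrt 5 + δmin ≤ f q := by
    intro q hq
    have hq' : q ∈ P := Finset.mem_of_mem_erase hq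
    rw [hP, Finset.mem_filter, Finset.mem_offDiag] at hq'
    exact hδmin_le _ _ hq'.1.2.2
  -- sum bound on the nine other pairs
  have hTle : (∑ q ∈ (Finset.univ : Finset (Fin 5)).offDiag, f q)
      ≤ 20 / Real.sqrt 5 + c₁ * ε ^ 2 := by
    have := (abs_le.mp lemA).2
    linarith
  have hsum_split : ∑ q ∈ P, f q = f q0 + ∑ q ∈ P9, f q :=
    (Finset.add_sum_erase _ _ hq0P).symm
  have h20 : (20:ℝ) / Real.sqrt 5 = 20 * (1 / Real.sqrt 5) := by ring
  have hS9 : ∑ q ∈ P9, f q ≤ 9 * (1 / Real.sqrt 5) - δmin + c₁ * ε ^ 2 / 2 := by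
    rw [hsplit, hsum_split, hq0val, h20] at hTle
    linarith
  -- ε² in terms of δmin²
  have hε2 : c₂ ^ 2 * ε ^ 2 ≤ δmin ^ 2 := by
    have h := mul_self_le_mul_self (by positivity : (0:ℝ) ≤ c₂ * ε)
      (by linarith : c₂ * ε ≤ -δmin)
    nlinarith [h]
  set B : ℝ := 1 / Real.sqrt 5 - δmin / 9 + (c₁ / c₂ ^ 2) * δmin ^ 2 with hB
  have hcc : 0 < c₁ / c₂ ^ 2 := div_pos hc₁ (pow_pos hc₂ 2)
  have hS9B : ∑ q ∈ P9, f q ≤ 9 * B := by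
    have h1 : c₁ / c₂ ^ 2 * (c₂ ^ 2 * ε ^ 2) ≤ c₁ / c₂ ^ 2 * δmin ^ 2 :=
      mul_le_mul_of_nonneg_left hε2 hcc.le
    have h2 : c₁ / c₂ ^ 2 * (c₂ ^ 2 * ε ^ 2) = c₁ * ε ^ 2 := by field_simp
    rw [hB]
    nlinarith
  have hBpos : 0 < B := by
    have h1 : 0 ≤ (c₁ / c₂ ^ 2) * δmin ^ 2 := by positivity
    have h2 : 0 < 1 / Real.sqrt 5 := by linarith
    rw [hB]; linarith
  have hsum9_lb : 9 * (1 / Real.sqrt 5 + δmin) ≤ ∑ q ∈ P9, f q := by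
    have := Finset.card_nsmul_le_sum P9 f _ hflb
    rw [hcard9, nsmul_eq_mul] at this
    have h9 : ((9:ℕ):ℝ) = 9 := by norm_num
    rw [h9] at this
    exact this
  have hsum9_pos : 0 < ∑ q ∈ P9, f q := lt_of_lt_of_le (by linarith) hsum9_lb
  -- Jensen
  have hconv := convexOn_rpow_neg hp
  have hmem : ∀ q ∈ P9, f q ∈ Set.Ioi (0:ℝ) :=
    fun q hq => lt_of_lt_of_le hpos (hflb q hq)
  have hjensen := hconv.map_sum_le (t := P9) (w := fun _ => (1:ℝ)/9) (p := f)
    (fun i _ => by norm_num)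
    (by rw [Finset.sum_const, hcard9]; norm_num) hmem
  have havg : ∑ q ∈ P9, ((1:ℝ)/9) • f q = (∑ q ∈ P9, f q) / 9 := by
    simp only [smul_eq_mul, ← Finset.mul_sum]
    ring
  have hrhs : ∑ q ∈ P9, ((1:ℝ)/9) • f q ^ (-p) = (∑ q ∈ P9, f q ^ (-p)) / 9 := by
    simp only [smul_eq_mul, ← Finset.mul_sum]
    ring
  rw [havg, hrhs] at hjensen
  -- avg ≤ B and monotonicity
  have havg_pos : 0 < (∑ q ∈ P9, f q) / 9 := by linarith
  have havg_le : (∑ q ∈ P9, f q) / 9 ≤ B := by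
    rw [div_le_iff₀ (by norm_num : (0:ℝ) < 9)]
    linarith
  have hmono : B ^ (-p) ≤ ((∑ q ∈ P9, f q) / 9) ^ (-p) :=
    Real.rpow_le_rpow_of_nonpos havg_pos havg_le (neg_nonpos.mpr hp.le)
  -- assemble
  have hfinal : ∑ q ∈ P, f q ^ (-p) = f q0 ^ (-p) + ∑ q ∈ P9, f q ^ (-p) :=
    (Finset.add_sum_erase _ _ hq0P).symm
  calc (1 / Real.sqrt 5 + δmin) ^ (-p) + 9 * B ^ (-p)
      ≤ (1 / Real.sqrt 5 + δmin) ^ (-p) + 9 * (((∑ q ∈ P9, f q) / 9) ^ (-p)) := by linarith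
    _ ≤ (1 / Real.sqrt 5 + δmin) ^ (-p) + ∑ q ∈ P9, f q ^ (-p) := by linarith
    _ = ∑ q ∈ P, f q ^ (-p) := by rw [hfinal, hq0val]
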